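/- Let g ≥ 1, let τ be a symmetric g×g complex matrix whose imaginary part Im τ is positive definite, and let σ, σ′ ∈ ℂ^g with σ ≠ 0. Then there exists a g×g complex matrix C such that for every index k ∈ {1,…,g} one has Im( Σ_i C_{k i}·σ_i + σ_k ) = 0 and Im( Σ_{j,i} C_{j i}·σ_i·τ_{j k} + σ′_k ) = 0. -/

import Mathlib

/-! Write `v := C σ`. Since `σ ≠ 0`, every `v ∈ ℂ^g` has this form, so the system only
prescribes `Im v = -Im σ` and `Im (vᵀ τ) = -Im σ'`. With `v = a + i b` the second condition
reads `aᵀ Im τ = -Im σ' - bᵀ Re τ`, a real linear system for `a` that is solvable because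
`Im τ` is positive definite, hence invertible. -/

open Matrix

theorem Matrix.exists_mulVec_eq_of_ne_zero {K m n : Type*} [Field K] [Fintype n]
    [DecidableEq n] {σ : n → K} (hσ : σ ≠ 0) (v : m → K) : ∃ C : Matrix m n K, C *ᵥ σ = v := by
  obtain ⟨i₀, hi₀⟩ := Function.ne_iff.mp hσ
  refine ⟨vecMulVec v (Pi.single i₀ (σ i₀)⁻¹), ?_⟩
  rw [vecMulVec_mulVec, single_dotProduct, inv_mul_cancel₀ hi₀, MulOpposite.op_one, one_smul]

theorem Matrix.im_vecMul {m n : Type*} [Fintype m] (v : m → ℂ) (τ : Matrix m n ℂ) (k : n) :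
    ((v ᵥ* τ) k).im =
      ((fun j => (v j).re) ᵥ* τ.map Complex.im) k + ((fun j => (v j).im) ᵥ* τ.map Complex.re) k := by
  simp only [vecMul, dotProduct, map_apply, Complex.im_sum, Complex.mul_im, Finset.sum_add_distrib]

theorem Matrix.exists_im_eq_and_im_vecMul_eq {n : Type*} [Fintype n] [DecidableEq n]
    {τ : Matrix n n ℂ} (hτ : IsUnit (τ.map Complex.im)) (b c : n → ℝ) :
    ∃ v : n → ℂ, (∀ k, (v k).im = b k) ∧ ∀ k, ((v ᵥ* τ) k).im = c k := by
  set a := (c - b ᵥ* τ.map Complex.re) ᵥ* (τ.map Complex.im)⁻¹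
  have ha : a ᵥ* τ.map Complex.im = c - b ᵥ* τ.map Complex.re := by
    rw [vecMul_vecMul, nonsing_inv_mul _ ((isUnit_iff_isUnit_det _).mp hτ), vecMul_one]
  refine ⟨fun k => ⟨a k, b k⟩, fun k => rfl, fun k => ?_⟩
  rw [im_vecMul]
  change (a ᵥ* τ.map Complex.im) k + (b ᵥ* τ.map Complex.re) k = c k
  rw [ha, Pi.sub_apply, sub_add_cancel]

theorem flat_factor_unitarization_system
    (g : ℕ)
    (τ : Matrix (Fin g) (Fin g) ℂ)
    (hτpos : (Matrix.of fun i j => (τ i j).im).PosDef)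
    (σ σ' : Fin g → ℂ) (hσ : σ ≠ 0) :
    ∃ C : Matrix (Fin g) (Fin g) ℂ,
      ∀ k : Fin g,
        ((∑ i, C k i * σ i) + σ k).im = 0 ∧
        ((∑ j, ∑ i, C j i * σ i * τ j k) + σ' k).im = 0 := by
  obtain ⟨v, hv, hvτ⟩ := exists_im_eq_and_im_vecMul_eq (τ := τ) hτpos.isUnit
    (fun k => -(σ k).im) (fun k => -(σ' k).im)
  obtain ⟨C, rfl⟩ := exists_mulVec_eq_of_ne_zero hσ v
  refine ⟨C, fun k => ⟨?_, ?_⟩⟩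
  · rw [Complex.add_im, show ∑ i, C k i * σ i = (C *ᵥ σ) k from rfl, hv, neg_add_cancel]
  · have hCστ : ∑ j, ∑ i, C j i * σ i * τ j k = ((C *ᵥ σ) ᵥ* τ) k := by
      simp only [← Finset.sum_mul]
      rfl
    rw [Complex.add_im, hCστ, hvτ, neg_add_cancel]
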